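/- Suppose there exist three orthonormal bases of ℂ⁴ that together distinguish all pure states, i.e., the map sending each pure state ρ to the twelve probabilities (⟨φ, ρφ⟩) over all twelve basis vectors φ is injective on pure states. Then there exists a POVM on ℂ⁴ with exactly 10 elements, each of rank at most one, such that the map sending each pure state to its outcome probability vector under this POVM is injective on pure states (a 10-element rank-1 PSIR-complete POVM on ℂ⁴). -/

import Mathlib

open Matrix BigOperators ComplexOrder

/-- The pure state (rank-one projection) `|φ⟩⟨φ|` associated to a vector `φ`. -/
noncomputable def pureState {d : ℕ} (φ : Fin d → ℂ) : Matrix (Fin d) (Fin d) ℂ :=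
  Matrix.vecMulVec φ (star φ)

/-- `φ` is a unit vector. -/
def IsUnitVec {d : ℕ} (φ : Fin d → ℂ) : Prop := star φ ⬝ᵥ φ = 1

/-!
Keep the whole first basis and the first three vectors of the other two bases: ten vectors `vᵢ`.
Their outcome probabilities `|⟨vᵢ, w⟩|²` still determine `⟨w, w⟩` (sum over the first basis), hence
those of the two omitted vectors; rescaling to unit vectors, they therefore determine `|w⟩⟨w|` for
every `w`, not only for unit vectors. In particular the frame operator `T = ∑ |vᵢ⟩⟨vᵢ|` is positive
definite. Choosing an invertible `B` with `B T B* = 1`, the operators `|B vᵢ⟩⟨B vᵢ|` form a rank-one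
POVM, and its outcome probabilities on `|ψ⟩⟨ψ|` are those of the `vᵢ` on `|B* ψ⟩⟨B* ψ|`, which
determine `|ψ⟩⟨ψ|` because `B` is invertible.
-/

theorem exists_isUnit_mul_mul_conjTranspose_eq_one {𝕜 n : Type*} [RCLike 𝕜] [Fintype n]
    [DecidableEq n] {T : Matrix n n 𝕜} (hT : T.PosDef) :
    ∃ B : Matrix n n 𝕜, IsUnit B ∧ B * T * Bᴴ = 1 := by
  open scoped MatrixOrder in
  obtain ⟨y, rfl⟩ := CStarAlgebra.nonneg_iff_eq_star_mul_self.mp hT.posSemidef.nonneg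
  have hy : IsUnit y := by
    have hdet := hT.isUnit
    rw [isUnit_iff_isUnit_det, det_mul] at hdet
    exact (isUnit_iff_isUnit_det y).mpr (isUnit_of_mul_isUnit_right hdet)
  obtain ⟨u, rfl⟩ := hy
  refine ⟨star ↑u⁻¹, (u⁻¹).isUnit.star, ?_⟩
  rw [← star_eq_conjTranspose, star_star, ← mul_assoc, ← star_mul, Units.mul_inv, star_one,
    one_mul, Units.mul_inv]

section

variable {d : ℕ}

theorem pureState_posSemidef (v : Fin d → ℂ) : (pureState v).PosSemidef :=
  posSemidef_vecMulVec_self_star v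

theorem rank_pureState_le_one (v : Fin d → ℂ) : (pureState v).rank ≤ 1 :=
  rank_vecMulVec_le v (star v)

theorem pureState_mulVec (M : Matrix (Fin d) (Fin d) ℂ) (v : Fin d → ℂ) :
    pureState (M *ᵥ v) = M * pureState v * Mᴴ := by
  rw [pureState, pureState, star_mulVec, mul_vecMulVec, vecMulVec_mul]

theorem pureState_smul (c : ℂ) (v : Fin d → ℂ) :
    pureState (c • v) = (c * star c) • pureState v := by
  rw [pureState, pureState, star_smul, smul_vecMulVec, vecMulVec_smul, smul_smul]

theorem trace_pureState_mul (ψ : Fin d → ℂ) (M : Matrix (Fin d) (Fin d) ℂ) :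
    (pureState ψ * M).trace = star ψ ⬝ᵥ M *ᵥ ψ := by
  rw [pureState, vecMulVec_mul, trace_vecMulVec, dotProduct_comm, dotProduct_mulVec]

theorem trace_pureState (ψ : Fin d → ℂ) : (pureState ψ).trace = star ψ ⬝ᵥ ψ := by
  rw [pureState, trace_vecMulVec, dotProduct_comm]

theorem dotProduct_pureState_mulVec (u χ : Fin d → ℂ) :
    star u ⬝ᵥ pureState χ *ᵥ u = (star u ⬝ᵥ χ) * (star χ ⬝ᵥ u) := by
  rw [pureState, vecMulVec_mulVec, dotProduct_smul, MulOpposite.smul_eq_mul_unop,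
    MulOpposite.unop_op, mul_comm]

theorem dotProduct_pureState_mulVec_comm (u χ : Fin d → ℂ) :
    star u ⬝ᵥ pureState χ *ᵥ u = star χ ⬝ᵥ pureState u *ᵥ χ := by
  rw [dotProduct_pureState_mulVec, dotProduct_pureState_mulVec, mul_comm]

theorem dotProduct_pureState_mulVec_mulVec (M : Matrix (Fin d) (Fin d) ℂ) (u ψ : Fin d → ℂ) :
    star (M *ᵥ u) ⬝ᵥ pureState ψ *ᵥ (M *ᵥ u) = star u ⬝ᵥ pureState (Mᴴ *ᵥ ψ) *ᵥ u := by
  rw [pureState_mulVec, conjTranspose_conjTranspose, star_mulVec, ← dotProduct_mulVec,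
    mulVec_mulVec, mulVec_mulVec, Matrix.mul_assoc]

theorem dotProduct_pureState_smul_mulVec (c : ℂ) (u χ : Fin d → ℂ) :
    star u ⬝ᵥ pureState (c • χ) *ᵥ u = c * star c * (star u ⬝ᵥ pureState χ *ᵥ u) := by
  rw [pureState_smul, smul_mulVec, dotProduct_smul, smul_eq_mul]

theorem star_smul_dotProduct_smul (c : ℂ) (w : Fin d → ℂ) :
    star (c • w) ⬝ᵥ (c • w) = c * star c * (star w ⬝ᵥ w) := by
  rw [star_smul, smul_dotProduct, dotProduct_smul, smul_eq_mul, smul_eq_mul, ← mul_assoc,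
    mul_comm (star c)]

def DistinguishesPureStates {ι : Type*} (v : ι → Fin d → ℂ) : Prop :=
  ∀ ψ₁ ψ₂ : Fin d → ℂ, IsUnitVec ψ₁ → IsUnitVec ψ₂ →
    (∀ i, star (v i) ⬝ᵥ pureState ψ₁ *ᵥ v i = star (v i) ⬝ᵥ pureState ψ₂ *ᵥ v i) →
    pureState ψ₁ = pureState ψ₂

theorem DistinguishesPureStates.pureState_eq {ι : Type*} {v : ι → Fin d → ℂ}
    (hv : DistinguishesPureStates v) {w₁ w₂ : Fin d → ℂ}
    (hnorm : star w₁ ⬝ᵥ w₁ = star w₂ ⬝ᵥ w₂)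
    (hprob : ∀ i, star (v i) ⬝ᵥ pureState w₁ *ᵥ v i = star (v i) ⬝ᵥ pureState w₂ *ᵥ v i) :
    pureState w₁ = pureState w₂ := by
  rcases (dotProduct_star_self_nonneg w₁).eq_or_lt with h0 | hpos
  · have h₁ : w₁ = 0 := dotProduct_star_self_eq_zero.mp h0.symm
    have h₂ : w₂ = 0 := dotProduct_star_self_eq_zero.mp (hnorm ▸ h0.symm)
    rw [h₁, h₂]
  obtain ⟨t, ht, hr⟩ := RCLike.pos_iff_exists_ofReal.mp hpos
  set c : ℂ := (((√t)⁻¹ : ℝ) : ℂ)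
  have hc : c * star c = (t : ℂ)⁻¹ := by
    rw [Complex.star_def, Complex.conj_ofReal, ← Complex.ofReal_mul, ← mul_inv,
      Real.mul_self_sqrt ht.le, Complex.ofReal_inv]
  have hunit : ∀ w : Fin d → ℂ, star w ⬝ᵥ w = t → IsUnitVec (c • w) := fun w hw => by
    rw [IsUnitVec, star_smul_dotProduct_smul, hw, hc]
    exact inv_mul_cancel₀ (by exact_mod_cast ht.ne')
  have hscaled := hv (c • w₁) (c • w₂) (hunit w₁ hr.symm) (hunit w₂ (hnorm ▸ hr.symm))
    fun i => by rw [dotProduct_pureState_smul_mulVec, dotProduct_pureState_smul_mulVec, hprob i]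
  rw [pureState_smul, pureState_smul] at hscaled
  exact smul_right_injective _ (hc ▸ inv_ne_zero (by exact_mod_cast ht.ne')) hscaled

theorem sum_pureState_eq_one {b : Fin d → Fin d → ℂ}
    (hb : ∀ k l, star (b k) ⬝ᵥ b l = if k = l then 1 else 0) : ∑ k, pureState (b k) = 1 := by
  let A : Matrix (Fin d) (Fin d) ℂ := (of b)ᵀ
  have hAA : Aᴴ * A = 1 := by
    ext k l
    simpa [A, mul_apply, dotProduct, one_apply] using hb k l
  ext p q
  have h : (A * Aᴴ) p q = (1 : Matrix (Fin d) (Fin d) ℂ) p q := by rw [mul_eq_one_comm.mp hAA]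
  simpa [A, mul_apply, pureState, Matrix.sum_apply, vecMulVec_apply] using h

theorem sum_dotProduct_pureState_mulVec {b : Fin d → Fin d → ℂ}
    (hb : ∀ k l, star (b k) ⬝ᵥ b l = if k = l then 1 else 0) (w : Fin d → ℂ) :
    ∑ k, star (b k) ⬝ᵥ pureState w *ᵥ b k = star w ⬝ᵥ w := by
  simp_rw [← trace_pureState_mul, ← trace_sum, ← Finset.sum_mul, sum_pureState_eq_one hb,
    Matrix.one_mul, trace_pureState]

def DistinguishesRankOne {ι : Type*} (v : ι → Fin d → ℂ) : Prop :=
  ∀ w₁ w₂ : Fin d → ℂ,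
    (∀ i, star (v i) ⬝ᵥ pureState w₁ *ᵥ v i = star (v i) ⬝ᵥ pureState w₂ *ᵥ v i) →
    pureState w₁ = pureState w₂

theorem DistinguishesRankOne.posDef_sum_pureState {ι : Type*} [Fintype ι] {v : ι → Fin d → ℂ}
    (hv : DistinguishesRankOne v) : (∑ i, pureState (v i)).PosDef := by
  have hpsd : ∀ i, (pureState (v i)).PosSemidef := fun i => pureState_posSemidef _
  refine .of_dotProduct_mulVec_pos (posSemidef_sum _ fun i _ => hpsd i).isHermitian
    fun x hx => ?_
  rw [sum_mulVec, dotProduct_sum]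
  refine lt_of_le_of_ne (Finset.sum_nonneg fun i _ => (hpsd i).dotProduct_mulVec_nonneg x)
    fun hsum => hx ?_
  have hzero := (Finset.sum_eq_zero_iff_of_nonneg fun i _ =>
    (hpsd i).dotProduct_mulVec_nonneg x).mp hsum.symm
  have hx0 : pureState x = pureState 0 := hv x 0 fun i => by
    rw [dotProduct_pureState_mulVec_comm, hzero i (Finset.mem_univ i), pureState, star_zero,
      vecMulVec_zero, zero_mulVec, dotProduct_zero]
  rw [← dotProduct_star_self_eq_zero, ← trace_pureState, hx0, trace_pureState, dotProduct_zero]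

theorem DistinguishesRankOne.exists_rankOne_povm {ι : Type*} [Fintype ι] {v : ι → Fin d → ℂ}
    (hv : DistinguishesRankOne v) :
    ∃ F : ι → Matrix (Fin d) (Fin d) ℂ,
      (∀ i, (F i).PosSemidef) ∧ (∀ i, (F i).rank ≤ 1) ∧ (∑ i, F i = 1) ∧
      (∀ ψ₁ ψ₂ : Fin d → ℂ,
        (∀ i, (pureState ψ₁ * F i).trace = (pureState ψ₂ * F i).trace) →
        pureState ψ₁ = pureState ψ₂) := by
  obtain ⟨B, hB, hBT⟩ := exists_isUnit_mul_mul_conjTranspose_eq_one hv.posDef_sum_pureState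
  refine ⟨fun i => pureState (B *ᵥ v i), fun i => pureState_posSemidef _,
    fun i => rank_pureState_le_one _, ?_, fun ψ₁ ψ₂ h => ?_⟩
  · simp_rw [pureState_mulVec, ← Finset.sum_mul, ← Finset.mul_sum, hBT]
  have hBψ : pureState (Bᴴ *ᵥ ψ₁) = pureState (Bᴴ *ᵥ ψ₂) := hv _ _ fun i => by
    have hi := h i
    rwa [trace_pureState_mul, trace_pureState_mul, dotProduct_pureState_mulVec_comm ψ₁,
      dotProduct_pureState_mulVec_comm ψ₂, dotProduct_pureState_mulVec_mulVec,
      dotProduct_pureState_mulVec_mulVec] at hi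
  rw [pureState_mulVec, pureState_mulVec, conjTranspose_conjTranspose] at hBψ
  exact hB.star.mul_left_cancel (hB.mul_right_cancel hBψ)

theorem DistinguishesPureStates.distinguishesRankOne_omit_last {m n : ℕ}
    {b : Fin (m + 1) → Fin (n + 1) → Fin (n + 1) → ℂ}
    (hb : ∀ j k l, star (b j k) ⬝ᵥ b j l = if k = l then 1 else 0)
    (hdist : DistinguishesPureStates fun p : Fin (m + 1) × Fin (n + 1) => b p.1 p.2) :
    DistinguishesRankOne
      fun p : {p : Fin (m + 1) × Fin (n + 1) // p.1 = 0 ∨ p.2 ≠ Fin.last n} => b p.1.1 p.1.2 := by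
  intro w₁ w₂ h
  have hnorm : star w₁ ⬝ᵥ w₁ = star w₂ ⬝ᵥ w₂ := by
    rw [← sum_dotProduct_pureState_mulVec (hb 0), ← sum_dotProduct_pureState_mulVec (hb 0)]
    exact Finset.sum_congr rfl fun k _ => h ⟨(0, k), Or.inl rfl⟩
  refine hdist.pureState_eq hnorm fun ⟨j, k⟩ => ?_
  obtain rfl | hk := eq_or_ne k (Fin.last n)
  swap
  · exact h ⟨(j, k), Or.inr hk⟩
  have hlast : ∀ w, star (b j (Fin.last n)) ⬝ᵥ pureState w *ᵥ b j (Fin.last n) =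
      star w ⬝ᵥ w - ∑ k : Fin n, star (b j k.castSucc) ⬝ᵥ pureState w *ᵥ b j k.castSucc := by
    intro w
    rw [← sum_dotProduct_pureState_mulVec (hb j), Fin.sum_univ_castSucc, add_sub_cancel_left]
  rw [hlast, hlast, hnorm]
  exact congrArg _ (Finset.sum_congr rfl fun k _ =>
    h ⟨(j, k.castSucc), Or.inr (Fin.castSucc_ne_last k)⟩)

end

theorem stmt_14 (φ : Fin 3 → Fin 4 → Fin 4 → ℂ)
    (horth : ∀ j k l, star (φ j k) ⬝ᵥ φ j l = if k = l then 1 else 0)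
    (hdist : ∀ ψ₁ ψ₂ : Fin 4 → ℂ, IsUnitVec ψ₁ → IsUnitVec ψ₂ →
      (∀ j k, star (φ j k) ⬝ᵥ (pureState ψ₁).mulVec (φ j k) =
              star (φ j k) ⬝ᵥ (pureState ψ₂).mulVec (φ j k)) →
      pureState ψ₁ = pureState ψ₂) :
    ∃ F : Fin 10 → Matrix (Fin 4) (Fin 4) ℂ,
      (∀ k, (F k).PosSemidef) ∧ (∀ k, (F k).rank ≤ 1) ∧ (∑ k, F k = 1) ∧
      (∀ ψ₁ ψ₂ : Fin 4 → ℂ, IsUnitVec ψ₁ → IsUnitVec ψ₂ →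
        (∀ k, (pureState ψ₁ * F k).trace = (pureState ψ₂ * F k).trace) →
        pureState ψ₁ = pureState ψ₂) := by
  have hv := DistinguishesPureStates.distinguishesRankOne_omit_last horth
    fun ψ₁ ψ₂ h₁ h₂ h => hdist ψ₁ ψ₂ h₁ h₂ fun j k => h (j, k)
  obtain ⟨F, hpsd, hrank, hsum, hinj⟩ := hv.exists_rankOne_povm
  let e := Fintype.equivFinOfCardEq (show Fintype.card
    {p : Fin 3 × Fin 4 // p.1 = 0 ∨ p.2 ≠ Fin.last 3} = 10 by decide)
  refine ⟨F ∘ e.symm, fun k => hpsd _, fun k => hrank _, (e.symm.sum_comp F).trans hsum,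
    fun ψ₁ ψ₂ _ _ h => hinj ψ₁ ψ₂ fun i => by
      simpa only [Function.comp_apply, Equiv.symm_apply_apply] using h (e i)⟩
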